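/- In type Dₙ with n ≥ 6 even, a dominant coweight μ with ω₁^∨ ≤ μ satisfies μ ≱ ω₁^∨ + ω₂^∨ if and only if μ ≤ ω_{n-1}^∨ + ωₙ^∨. -/

import Mathlib

/-- The simple coroots of type `Dₙ` in `ℤⁿ`: `αᵢ^∨ = eᵢ - eᵢ₊₁` for `i ≤ n-1` and
`αₙ^∨ = e_{n-1} + eₙ` (indices `i : Fin n` are 0-based). -/
def Dcoroot (n : ℕ) (i : Fin n) : Fin n → ℤ :=
  fun j => if i.val = n - 1 then (if j.val = n - 2 ∨ j.val = n - 1 then 1 else 0)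
    else if j.val = i.val then 1 else if j.val = i.val + 1 then -1 else 0

/-- The fundamental coweight `ωₘ^∨ = e₁ + ⋯ + eₘ` of type `Dₙ` for `m ≤ n - 2`. -/
def Domega (n m : ℕ) : Fin n → ℤ := fun j => if j.val < m then 1 else 0

/-- Dominance order: `μ - λ` is a nonnegative integer combination of simple coroots. -/
def DdomLE (n : ℕ) (lam mu : Fin n → ℤ) : Prop :=
  ∃ c : Fin n → ℕ, mu - lam = ∑ i, (c i : ℤ) • Dcoroot n i

/-- Dominant coweights of type `Dₙ`: `μ₁ ≥ ⋯ ≥ μₙ` and `μ_{n-1} + μₙ ≥ 0`. -/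
def Ddominant (n : ℕ) (mu : Fin n → ℤ) : Prop :=
  Antitone mu ∧ ∀ i j : Fin n, i.val = n - 2 → j.val = n - 1 → 0 ≤ mu i + mu j

/-! Write `S_m(δ) = δ₁ + ⋯ + δ_m`. The coefficients of `δ` in the simple coroots are
`S₁, …, S_{n-2}, S_{n-1} - S_n/2, S_n/2`, so `λ ≤ μ` amounts to sign and parity conditions on the
partial sums of `μ - λ`; in particular `μ ≥ ω₁^∨` makes `S_n(μ)` odd. If `μ₁ ≥ 2`, dominance
(`μ₁ ≥ ⋯ ≥ μ_{n-1} ≥ |μₙ|`) makes the partial sums of `μ` large enough for `μ ≥ ω₁^∨ + ω₂^∨`.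
If `μ₁ ≤ 1`, all entries are at most `1`, and since `n - 1` is odd the parity of `S_n(μ)` gives
`μ ≤ e₁ + ⋯ + e_{n-1}`. The two relations exclude each other because the first forces `μ₁ ≥ 2`
and the second `μ₁ ≤ 1`. -/

open Finset

variable {n : ℕ}

def partialSum (n m : ℕ) : (Fin n → ℤ) →ₗ[ℤ] ℤ :=
  ∑ j : Fin n with j.val < m, LinearMap.proj j

theorem partialSum_apply (m : ℕ) (f : Fin n → ℤ) :
    partialSum n m f = ∑ j : Fin n with j.val < m, f j := by
  simp [partialSum]

@[simp]
theorem partialSum_zero (f : Fin n → ℤ) : partialSum n 0 f = 0 := by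
  simp [partialSum_apply]

theorem partialSum_succ {m : ℕ} (hm : m < n) (f : Fin n → ℤ) :
    partialSum n (m + 1) f = partialSum n m f + f ⟨m, hm⟩ := by
  have : univ.filter (fun j : Fin n => j.val < m + 1) =
      insert ⟨m, hm⟩ (univ.filter fun j : Fin n => j.val < m) := by
    ext j; simp [Fin.ext_iff]; omega
  rw [partialSum_apply, partialSum_apply, this, sum_insert (by simp), add_comm]

theorem partialSum_eq_pred_add {m : ℕ} (hm : 0 < m) (hmn : m ≤ n) (f : Fin n → ℤ) :
    partialSum n m f = partialSum n (m - 1) f + f ⟨m - 1, by omega⟩ := by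
  rw [← partialSum_succ, Nat.sub_add_cancel hm]

theorem partialSum_one (hn : 0 < n) (f : Fin n → ℤ) : partialSum n 1 f = f ⟨0, hn⟩ := by
  simpa using partialSum_succ hn f

theorem partialSum_le_partialSum {a b : ℕ} (hab : a ≤ b) {f : Fin n → ℤ}
    (h : ∀ j : Fin n, a ≤ j → j < b → 0 ≤ f j) : partialSum n a f ≤ partialSum n b f := by
  rw [partialSum_apply, partialSum_apply]
  refine sum_le_sum_of_subset_of_nonneg (fun j => by simp; omega) fun j hj hja => ?_
  simp only [mem_filter, mem_univ, true_and, not_lt] at hj hja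
  exact h j hja hj

theorem partialSum_le_partialSum_of_nonpos {a b : ℕ} (hab : a ≤ b) {f : Fin n → ℤ}
    (h : ∀ j : Fin n, a ≤ j → j < b → f j ≤ 0) : partialSum n b f ≤ partialSum n a f := by
  have := partialSum_le_partialSum hab (f := -f) fun j h1 h2 => by simpa using h j h1 h2
  simpa using this

theorem partialSum_le_mul {m : ℕ} (hm : m ≤ n) {f : Fin n → ℤ} {x : ℤ}
    (h : ∀ j : Fin n, f j ≤ x) : partialSum n m f ≤ m * x := by
  induction m with
  | zero => simp
  | succ m ih =>
    rw [partialSum_succ hm]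
    push_cast
    linarith [ih (by omega), h ⟨m, hm⟩]

theorem eq_of_partialSum_eq {f g : Fin n → ℤ}
    (h : ∀ m ≤ n, partialSum n m f = partialSum n m g) : f = g := by
  funext j
  have hf := partialSum_succ j.isLt f
  have hg := partialSum_succ j.isLt g
  rw [h _ j.isLt, h _ j.isLt.le] at hf
  simpa using hf.symm.trans hg

theorem partialSum_Domega {m : ℕ} (hm : m ≤ n) (k : ℕ) :
    partialSum n m (Domega n k) = min k m := by
  induction m with
  | zero => simp
  | succ m ih =>
    rw [partialSum_succ hm, ih (by omega), Domega]
    simp only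
    split_ifs <;> omega

theorem partialSum_Dcoroot (hn : 2 ≤ n) {m : ℕ} (hm : m ≤ n) (i : Fin n) :
    partialSum n m (Dcoroot n i) =
      if (i : ℕ) = n - 1 then (if n - 2 < m then 1 else 0) + (if n - 1 < m then 1 else 0)
      else if (i : ℕ) + 1 = m then 1 else 0 := by
  induction m with
  | zero => simp
  | succ m ih =>
    rw [partialSum_succ hm, ih (by omega), Dcoroot]
    simp only
    split_ifs <;> omega

theorem partialSum_sum_smul_Dcoroot (m : ℕ) (c : Fin n → ℤ) :
    partialSum n m (∑ i, c i • Dcoroot n i) = ∑ i, c i * partialSum n m (Dcoroot n i) := by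
  simp only [map_sum, map_zsmul, smul_eq_mul]

theorem partialSum_sum_smul_Dcoroot_of_le (hn : 2 ≤ n) {m : ℕ} (h1 : 1 ≤ m) (h2 : m ≤ n - 2)
    (c : Fin n → ℤ) : partialSum n m (∑ i, c i • Dcoroot n i) = c ⟨m - 1, by omega⟩ := by
  rw [partialSum_sum_smul_Dcoroot, sum_eq_single ⟨m - 1, by omega⟩]
  · rw [partialSum_Dcoroot hn (by omega)]
    simp only
    split_ifs <;> first | ring1 | omega
  · intro i _ hi
    rw [partialSum_Dcoroot hn (by omega)]
    simp only [ne_eq, Fin.ext_iff] at hi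
    split_ifs <;> first | ring1 | omega
  · simp

theorem partialSum_sum_smul_Dcoroot_pred (hn : 2 ≤ n) (c : Fin n → ℤ) :
    partialSum n (n - 1) (∑ i, c i • Dcoroot n i) =
      c ⟨n - 2, by omega⟩ + c ⟨n - 1, by omega⟩ := by
  rw [partialSum_sum_smul_Dcoroot, sum_eq_add ⟨n - 2, by omega⟩ ⟨n - 1, by omega⟩
    (by simp [Fin.ext_iff]; omega)]
  · rw [partialSum_Dcoroot hn (by omega), partialSum_Dcoroot hn (by omega)]
    simp only
    split_ifs <;> first | ring1 | omega
  · intro i _ hi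
    rw [partialSum_Dcoroot hn (by omega)]
    simp only [ne_eq, Fin.ext_iff] at hi
    split_ifs <;> first | ring1 | omega
  · simp
  · simp

theorem partialSum_sum_smul_Dcoroot_top (hn : 2 ≤ n) (c : Fin n → ℤ) :
    partialSum n n (∑ i, c i • Dcoroot n i) = 2 * c ⟨n - 1, by omega⟩ := by
  rw [partialSum_sum_smul_Dcoroot, sum_eq_single ⟨n - 1, by omega⟩]
  · rw [partialSum_Dcoroot hn le_rfl]
    simp only
    split_ifs <;> first | ring1 | omega
  · intro i _ hi
    rw [partialSum_Dcoroot hn le_rfl]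
    simp only [ne_eq, Fin.ext_iff] at hi
    split_ifs <;> first | ring1 | omega
  · simp

theorem domLE_iff (hn : 2 ≤ n) {lam mu : Fin n → ℤ} :
    DdomLE n lam mu ↔
      (∀ m, 1 ≤ m → m ≤ n - 2 → 0 ≤ partialSum n m (mu - lam)) ∧
      0 ≤ partialSum n n (mu - lam) ∧ 2 ∣ partialSum n n (mu - lam) ∧
      partialSum n n (mu - lam) ≤ 2 * partialSum n (n - 1) (mu - lam) := by
  unfold DdomLE
  generalize mu - lam = δ
  constructor
  · rintro ⟨c, rfl⟩
    rw [partialSum_sum_smul_Dcoroot_top hn, partialSum_sum_smul_Dcoroot_pred hn]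
    refine ⟨fun m h1 h2 => ?_, by positivity, dvd_mul_right _ _, by omega⟩
    rw [partialSum_sum_smul_Dcoroot_of_le hn h1 h2]
    positivity
  · rintro ⟨hlow, htop, ⟨k, hk⟩, hpred⟩
    set c : Fin n → ℤ := fun i =>
      if (i : ℕ) + 2 < n then partialSum n (i + 1) δ
      else if (i : ℕ) + 2 = n then partialSum n (n - 1) δ - k else k with hc
    have hc_nonneg (i : Fin n) : 0 ≤ c i := by
      simp only [hc]
      split_ifs with h1 h2
      · exact hlow _ (by omega) (by omega)
      all_goals omega
    refine ⟨fun i => (c i).toNat, eq_of_partialSum_eq fun m hm => ?_⟩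
    simp only [Int.toNat_of_nonneg (hc_nonneg _)]
    rcases Nat.eq_zero_or_pos m with rfl | h1
    · simp
    rcases Nat.lt_or_ge m (n - 1) with h2 | h2
    · rw [partialSum_sum_smul_Dcoroot_of_le hn h1 (by omega), hc]
      simp only [if_pos (show m - 1 + 2 < n by omega), Nat.sub_add_cancel h1]
    rcases Nat.lt_or_ge m n with h3 | h3
    · rw [show m = n - 1 by omega, partialSum_sum_smul_Dcoroot_pred hn, hc]
      simp only [if_neg (show ¬ n - 2 + 2 < n by omega), if_pos (show n - 2 + 2 = n by omega),
        if_neg (show ¬ n - 1 + 2 < n by omega), if_neg (show ¬ n - 1 + 2 = n by omega)]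
      ring
    · rw [show m = n by omega, partialSum_sum_smul_Dcoroot_top hn, hc]
      simp only [if_neg (show ¬ n - 1 + 2 < n by omega), if_neg (show ¬ n - 1 + 2 = n by omega)]
      omega

theorem Ddominant.nonneg {mu : Fin n → ℤ} (h : Ddominant n mu) (hn : 2 ≤ n) (j : Fin n)
    (hj : (j : ℕ) ≤ n - 2) : 0 ≤ mu j := by
  have h1 := h.1 (show j ≤ ⟨n - 2, by omega⟩ from hj)
  have h2 := h.1 (show (⟨n - 2, by omega⟩ : Fin n) ≤ ⟨n - 1, by omega⟩ from by simp; omega)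
  have h3 := h.2 ⟨n - 2, by omega⟩ ⟨n - 1, by omega⟩ rfl rfl
  omega

theorem Ddominant.neg_le_apply_last {mu : Fin n → ℤ} (h : Ddominant n mu) (hn : 2 ≤ n) :
    -mu ⟨n - 2, by omega⟩ ≤ mu ⟨n - 1, by omega⟩ := by
  linarith [h.2 ⟨n - 2, by omega⟩ ⟨n - 1, by omega⟩ rfl rfl]

theorem Ddominant.partialSum_eq_of_apply_one_nonpos {mu : Fin n → ℤ} (h : Ddominant n mu)
    (hn : 3 ≤ n) (h1 : mu ⟨1, by omega⟩ ≤ 0) : partialSum n n mu = mu ⟨0, by omega⟩ := by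
  have hupper := partialSum_le_partialSum_of_nonpos (show 1 ≤ n - 1 by omega) (f := mu)
    fun j hj _ => (h.1 (show ⟨1, by omega⟩ ≤ j from hj)).trans h1
  have hlower := partialSum_le_partialSum (show 1 ≤ n - 1 by omega) (f := mu)
    fun j _ hj => h.nonneg (by omega) j (by omega)
  have hlast := h.neg_le_apply_last (by omega)
  have h2 := h.1 (show (⟨1, by omega⟩ : Fin n) ≤ ⟨n - 2, by omega⟩ from by simp; omega)
  have h3 := h.1 (show (⟨1, by omega⟩ : Fin n) ≤ ⟨n - 1, by omega⟩ from by simp; omega)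
  rw [partialSum_eq_pred_add (by omega) le_rfl, ← partialSum_one (by omega) mu]
  omega

theorem DdomLE.apply_zero_le {lam mu : Fin n → ℤ} (h : DdomLE n lam mu) (hn : 3 ≤ n) :
    lam ⟨0, by omega⟩ ≤ mu ⟨0, by omega⟩ := by
  have := ((domLE_iff (by omega)).1 h).1 1 le_rfl (by omega)
  rw [partialSum_one (by omega), Pi.sub_apply] at this
  omega

theorem DdomLE.two_dvd_partialSum_sub {lam mu : Fin n → ℤ} (h : DdomLE n lam mu) (hn : 2 ≤ n) :
    2 ∣ partialSum n n mu - partialSum n n lam := by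
  simpa using ((domLE_iff hn).1 h).2.2.1

theorem domLE_Domega_one_add_Domega_two (hn : 3 ≤ n) {mu : Fin n → ℤ} (hdom : Ddominant n mu)
    (hodd : ¬ 2 ∣ partialSum n n mu) (h0 : 2 ≤ mu ⟨0, by omega⟩) :
    DdomLE n (Domega n 1 + Domega n 2) mu := by
  have hS {m : ℕ} (hm : m ≤ n) : partialSum n m (mu - (Domega n 1 + Domega n 2)) =
      partialSum n m mu - min 1 m - min 2 m := by
    rw [map_sub, map_add, partialSum_Domega hm, partialSum_Domega hm]
    ring
  have hmono {a b : ℕ} (hab : a ≤ b) (hb : b ≤ n - 1) : partialSum n a mu ≤ partialSum n b mu :=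
    partialSum_le_partialSum hab fun j _ hj => hdom.nonneg (by omega) j (by omega)
  have hS1 := partialSum_one (by omega) mu
  have hS2 : partialSum n 2 mu = mu ⟨0, by omega⟩ + mu ⟨1, by omega⟩ := by
    rw [partialSum_succ (by omega), partialSum_one]
  have hmid (m : ℕ) (h2 : 2 ≤ m) (hm : m ≤ n - 2) : 3 ≤ partialSum n m mu := by
    refine le_trans ?_ (hmono h2 (by omega))
    by_cases h1 : 1 ≤ mu ⟨1, by omega⟩
    · omega
    · -- then `μ = μ₁ e₁`, so `μ₁ = S_n(μ)` is odd
      have := hdom.partialSum_eq_of_apply_one_nonpos hn (by omega)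
      have := hdom.nonneg (by omega) ⟨1, by omega⟩ (by simp; omega)
      omega
  have hpred := partialSum_eq_pred_add (show 0 < n - 1 by omega) (by omega) mu
  have htop := partialSum_eq_pred_add (show 0 < n by omega) le_rfl mu
  have hlast := hdom.neg_le_apply_last (by omega)
  have hlast_le := hdom.1 (show (⟨n - 2, by omega⟩ : Fin n) ≤ ⟨n - 1, by omega⟩ from by simp; omega)
  have hfirst := hmono (show 1 ≤ n - 2 by omega) (by omega)
  simp only [show n - 1 - 1 = n - 2 by omega] at hpred
  rw [domLE_iff (by omega), hS le_rfl, hS (by omega)]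
  refine ⟨fun m h1 h2 => ?_, by omega, by omega, by omega⟩
  rw [hS (by omega)]
  rcases Nat.lt_or_ge m 2 with hm | hm
  · obtain rfl : m = 1 := by omega
    omega
  · have := hmid m hm h2
    omega

theorem domLE_Domega_pred (hn : 2 ≤ n) (heven : Even n) {mu : Fin n → ℤ} (hdom : Ddominant n mu)
    (hodd : ¬ 2 ∣ partialSum n n mu) (h0 : mu ⟨0, by omega⟩ ≤ 1) :
    DdomLE n mu (Domega n (n - 1)) := by
  have hle_one (j : Fin n) : mu j ≤ 1 :=
    (hdom.1 (show ⟨0, by omega⟩ ≤ j from Nat.zero_le _)).trans h0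
  have hS {m : ℕ} (hm : m ≤ n) :
      partialSum n m (Domega n (n - 1) - mu) = min (n - 1) m - partialSum n m mu := by
    rw [map_sub, partialSum_Domega hm]
  have hbound {m : ℕ} (hm : m ≤ n) : partialSum n m mu ≤ m := by
    simpa using partialSum_le_mul hm hle_one
  have hpred := partialSum_eq_pred_add (show 0 < n - 1 by omega) (by omega) mu
  have htop := partialSum_eq_pred_add (show 0 < n by omega) le_rfl mu
  have hlast := hdom.neg_le_apply_last hn
  have hmid := hle_one ⟨n - 2, by omega⟩
  have hSn2 := hbound (show n - 2 ≤ n by omega)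
  have hSn := hbound le_rfl
  -- the last condition reads `2 S_{n-1}(μ) - S_n(μ) ≤ n - 1`, between odd numbers
  simp only [show n - 1 - 1 = n - 2 by omega] at hpred
  obtain ⟨p, hp⟩ := heven
  rw [domLE_iff hn, hS le_rfl, hS (by omega)]
  refine ⟨fun m h1 h2 => ?_, by omega, by omega, by omega⟩
  rw [hS (by omega)]
  have := hbound (show m ≤ n by omega)
  omega

theorem stmt8_general (n : ℕ) (hn : 6 ≤ n) (heven : Even n) (mu : Fin n → ℤ)
    (hdom : Ddominant n mu)
    (hge : DdomLE n (Domega n 1) mu) :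
    (¬ DdomLE n (Domega n 1 + Domega n 2) mu) ↔ DdomLE n mu (Domega n (n - 1)) := by
  have hodd : ¬ 2 ∣ partialSum n n mu := by
    have := hge.two_dvd_partialSum_sub (by omega)
    rw [partialSum_Domega le_rfl] at this
    omega
  constructor
  · intro hnot
    refine domLE_Domega_pred (by omega) heven hdom hodd ?_
    by_contra! h0
    exact hnot (domLE_Domega_one_add_Domega_two (by omega) hdom hodd h0)
  · intro hle hge2
    have h2 := hge2.apply_zero_le (by omega)
    have h1 := hle.apply_zero_le (by omega)
    simp only [Pi.add_apply, Domega] at h1 h2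
    omega

/-- in type `Dₙ` with `n ≥ 6` even, a dominant coweight `μ` with
`μ - ω₁^∨` in the coroot lattice and `ω₁^∨ ≤ μ` satisfies `μ ≱ ω₁^∨ + ω₂^∨` iff
`μ ≤ ω_{n-1}^∨ + ωₙ^∨ = e₁ + ⋯ + e_{n-1}`. -/
theorem stmt8 (n : ℕ) (hn : 6 ≤ n) (heven : Even n) (mu : Fin n → ℤ)
    (hdom : Ddominant n mu)
    (hlat : ∃ c : Fin n → ℤ, mu - Domega n 1 = ∑ i, c i • Dcoroot n i)
    (hge : DdomLE n (Domega n 1) mu) :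
    (¬ DdomLE n (Domega n 1 + Domega n 2) mu) ↔ DdomLE n mu (Domega n (n - 1)) :=
  stmt8_general n hn heven mu hdom hge
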